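/- Let H be a real separable Hilbert space, let T and S be positive bounded linear operators on H, and let λ > 0. If ‖(T + λI)^{-1/2}(T − S)(T + λI)^{-1/2}‖ ≤ 1/4, then ‖(T + λI)^{-1/2}(S + λI)^{1/2}‖ ≤ √6/2. -/

import Mathlib

open ContinuousLinearMap

noncomputable def opow {E : Type*} [NormedAddCommGroup E] [InnerProductSpace ℝ E]
    [CompleteSpace E]
    [ContinuousFunctionalCalculus ℝ (E →L[ℝ] E) IsSelfAdjoint]
    (A : E →L[ℝ] E) (t : ℝ) : E →L[ℝ] E :=
  cfc (fun x : ℝ => x ^ t) A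

/-! With `C = P^{-1/2} Q^{1/2}`, `P = T + λ`, `Q = S + λ`, the C⋆-identity gives
`‖C‖² = ‖C C⋆‖ = ‖P^{-1/2} Q P^{-1/2}‖ = ‖1 - P^{-1/2} (T - S) P^{-1/2}‖ ≤ 1 + 1/4 ≤ 3/2`. -/

theorem spectrum_add_algebraMap_subset_Ici {A : Type*} [Ring A] [Algebra ℝ A] {a : A}
    (ha : ∀ x ∈ spectrum ℝ a, 0 ≤ x) (c : ℝ) :
    spectrum ℝ (a + algebraMap ℝ A c) ⊆ Set.Ici c := by
  rw [← spectrum.add_singleton_eq]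
  rintro _ ⟨x, hx, _, rfl, rfl⟩
  simpa using ha x hx

theorem ContinuousLinearMap.IsPositive.spectrum_add_smul_one_subset_Ici
    {H : Type*} [NormedAddCommGroup H] [InnerProductSpace ℝ H] [CompleteSpace H]
    {T : H →L[ℝ] H} (hT : T.IsPositive) (c : ℝ) :
    spectrum ℝ (T + c • 1) ⊆ Set.Ici c := by
  rw [← Algebra.algebraMap_eq_smul_one]
  exact spectrum_add_algebraMap_subset_Ici
    (SpectrumRestricts.nnreal_iff.mp hT.spectrumRestricts) c

theorem CStarRing.norm_mul_sq_le {R : Type*} [NormedRing R] [StarRing R] [CStarRing R]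
    {a b p : R} (ha : IsSelfAdjoint a) (hb : IsSelfAdjoint b)
    (hbpb : b * p * b = 1) :
    ‖b * a‖ ^ 2 ≤ 1 + ‖b * (p - a * a) * b‖ := by
  have hbaab : b * a * star (b * a) = 1 - b * (p - a * a) * b := by
    rw [star_mul, ha.star_eq, hb.star_eq, mul_sub, sub_mul, hbpb, sub_sub_cancel]
    simp only [mul_assoc]
  calc ‖b * a‖ ^ 2 = ‖1 - b * (p - a * a) * b‖ := by
        rw [sq, ← CStarRing.norm_self_mul_star, hbaab]
    _ ≤ ‖(1 : R)‖ + ‖b * (p - a * a) * b‖ := norm_sub_le _ _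
    _ ≤ 1 + ‖b * (p - a * a) * b‖ := by
        gcongr
        nontriviality R
        exact CStarRing.norm_one.le

section opow

variable {E : Type*} [NormedAddCommGroup E] [InnerProductSpace ℝ E] [CompleteSpace E]
  [ContinuousFunctionalCalculus ℝ (E →L[ℝ] E) IsSelfAdjoint]

theorem isSelfAdjoint_opow (A : E →L[ℝ] E) (t : ℝ) : IsSelfAdjoint (opow A t) :=
  cfc_predicate _ A

theorem opow_mul_opow {A : E →L[ℝ] E} (hA : ∀ x ∈ spectrum ℝ A, 0 < x) (s t : ℝ) :
    opow A s * opow A t = opow A (s + t) := by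
  have hcont (r : ℝ) : ContinuousOn (fun x : ℝ => x ^ r) (spectrum ℝ A) := fun x hx =>
    (Real.continuousAt_rpow_const x r (Or.inl (hA x hx).ne')).continuousWithinAt
  rw [opow, opow, opow, ← cfc_mul _ _ A (hcont s) (hcont t)]
  exact cfc_congr fun x hx => (Real.rpow_add (hA x hx) s t).symm

theorem opow_one {A : E →L[ℝ] E} (hA : IsSelfAdjoint A) : opow A 1 = A := by
  simp only [opow, Real.rpow_one]
  exact cfc_id' ℝ A

theorem opow_zero {A : E →L[ℝ] E} (hA : IsSelfAdjoint A) : opow A 0 = 1 := by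
  simp only [opow, Real.rpow_zero]
  exact cfc_const_one ℝ A

end opow

theorem stmt5_general
    {H : Type*} [NormedAddCommGroup H] [InnerProductSpace ℝ H] [CompleteSpace H]
    [ContinuousFunctionalCalculus ℝ (H →L[ℝ] H) IsSelfAdjoint]
    (T S : H →L[ℝ] H) (hT : T.IsPositive) (hS : S.IsPositive)
    (lam : ℝ) (hlam : 0 < lam)
    (hR : ‖opow (T + lam • 1) (-(1 / 2)) ∘L (T - S) ∘L opow (T + lam • 1) (-(1 / 2))‖
      ≤ 1 / 4) :
    ‖opow (T + lam • 1) (-(1 / 2)) ∘L opow (S + lam • 1) (1 / 2)‖ ≤ Real.sqrt 6 / 2 := by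
  set P := T + lam • 1
  set Q := S + lam • 1
  have hPspec : ∀ x ∈ spectrum ℝ P, 0 < x := fun x hx =>
    hlam.trans_le (hT.spectrum_add_smul_one_subset_Ici lam hx)
  have hQspec : ∀ x ∈ spectrum ℝ Q, 0 < x := fun x hx =>
    hlam.trans_le (hS.spectrum_add_smul_one_subset_Ici lam hx)
  have hPsa : IsSelfAdjoint P := (hT.add (isPositive_one.smul_of_nonneg hlam.le)).isSelfAdjoint
  have hQsa : IsSelfAdjoint Q := (hS.add (isPositive_one.smul_of_nonneg hlam.le)).isSelfAdjoint
  have hBPB : opow P (-(1 / 2)) * P * opow P (-(1 / 2)) = 1 := by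
    calc _ = opow P (-(1 / 2)) * opow P 1 * opow P (-(1 / 2)) := by rw [opow_one hPsa]
      _ = opow P 0 := by rw [opow_mul_opow hPspec, opow_mul_opow hPspec]; norm_num
      _ = 1 := opow_zero hPsa
  have hAA : opow Q (1 / 2) * opow Q (1 / 2) = Q := by
    rw [opow_mul_opow hQspec]
    norm_num [opow_one hQsa]
  have hC := CStarRing.norm_mul_sq_le (isSelfAdjoint_opow Q (1 / 2))
    (isSelfAdjoint_opow P (-(1 / 2))) hBPB
  rw [hAA, add_sub_add_right_eq_sub] at hC
  simp only [← mul_def, ← mul_assoc] at hR ⊢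
  refine (pow_le_pow_iff_left₀ (norm_nonneg _) (by positivity) two_ne_zero).mp ?_
  rw [div_pow, Real.sq_sqrt (by norm_num)]
  linarith

/-- the bound `Q*_{D,λ} ≤ √6/2` under the event `R_{D,λ} ≤ 1/4`. -/
theorem stmt5
    {H : Type*} [NormedAddCommGroup H] [InnerProductSpace ℝ H] [CompleteSpace H]
    [TopologicalSpace.SeparableSpace H]
    [ContinuousFunctionalCalculus ℝ (H →L[ℝ] H) IsSelfAdjoint]
    (T S : H →L[ℝ] H) (hT : T.IsPositive) (hS : S.IsPositive)
    (lam : ℝ) (hlam : 0 < lam)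
    (hR : ‖opow (T + lam • 1) (-(1 / 2)) ∘L (T - S) ∘L opow (T + lam • 1) (-(1 / 2))‖
      ≤ 1 / 4) :
    ‖opow (T + lam • 1) (-(1 / 2)) ∘L opow (S + lam • 1) (1 / 2)‖ ≤ Real.sqrt 6 / 2 :=
  stmt5_general T S hT hS lam hlam hR
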